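/- Let X₁, X₂ be real n×K matrices, Q a symmetric K×K matrix, λ₁, λ₂ > 0, and suppose Λⱼ = XⱼᵀXⱼ + λⱼQ is invertible for j = 1, 2; set Sⱼ = XⱼΛⱼ⁻¹Xⱼᵀ. Fix y ∈ ℝⁿ and b₂⁽⁰⁾ ∈ ℝᴷ, and define the backfitting iterates b₁⁽ℓ⁾ = Λ₁⁻¹X₁ᵀ(y − X₂b₂⁽ℓ⁻¹⁾), b₂⁽ℓ⁾ = Λ₂⁻¹X₂ᵀ(y − X₁b₁⁽ℓ⁾) for ℓ ≥ 1. Then for every ℓ ≥ 1, b₂⁽ℓ⁾ = Λ₂⁻¹X₂ᵀ (Σ_{j=0}^{ℓ−1} (S₁S₂)^j (Iₙ − S₁)) y + Λ₂⁻¹X₂ᵀ(S₁S₂)^{ℓ−1}S₁X₂ b₂⁽⁰⁾, where Iₙ is the n×n identity matrix. -/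

import Mathlib

/-! Eliminating `b₁` turns backfitting into the affine recursion
`b₂⁽ℓ⁺¹⁾ = A (1 - S₁) y + (A S₁ X₂) b₂⁽ℓ⁾` with `A = Λ₂⁻¹ X₂ᵀ`, whose solution is a geometric sum
in `M = A S₁ X₂`. Since `S₂ = X₂ A`, pushing `A` through the powers, `Mʲ A = A (S₁ S₂)ʲ`,
rewrites that sum in terms of the smoothers. -/

open Matrix

namespace Matrix

variable {k m R : Type*} [Fintype k] [Fintype m] [DecidableEq k] [DecidableEq m]

theorem mul_pow_mul [Semiring R] (A : Matrix k m R) (B : Matrix m k R) (j : ℕ) :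
    (A * B) ^ j * A = A * (B * A) ^ j := by
  induction j with
  | zero => simp
  | succ j ih => rw [pow_succ, Matrix.mul_assoc, Matrix.mul_assoc A B A, ← Matrix.mul_assoc, ih,
      Matrix.mul_assoc, ← pow_succ]

theorem eq_geom_sum_mulVec_of_affine_rec [Semiring R] (M : Matrix m m R) (c : m → R)
    (b : ℕ → m → R) (hb : ∀ ℓ, b (ℓ + 1) = c + M *ᵥ b ℓ) (ℓ : ℕ) :
    b ℓ = (∑ j ∈ Finset.range ℓ, M ^ j) *ᵥ c + (M ^ ℓ) *ᵥ b 0 := by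
  induction ℓ with
  | zero => simp
  | succ ℓ ih =>
    rw [hb, ih, mulVec_add, mulVec_mulVec, mulVec_mulVec, ← pow_succ', Finset.mul_sum,
      Finset.sum_range_succ', add_mulVec, pow_zero, one_mulVec]
    simp only [← pow_succ']
    abel

end Matrix

theorem backfitting_step {ι κ R : Type*} [Fintype ι] [Fintype κ] [DecidableEq ι] [DecidableEq κ]
    [CommRing R]
    (X₁ X₂ : Matrix ι κ R) (Λ₁ Λ₂ : Matrix κ κ R) (S₁ : Matrix ι ι R)
    (hS₁ : S₁ = X₁ * Λ₁⁻¹ * X₁ᵀ) (y : ι → R) (b₁ b₂ : ℕ → κ → R)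
    (hrec₁ : ∀ ℓ, b₁ (ℓ + 1) = Λ₁⁻¹ *ᵥ (X₁ᵀ *ᵥ (y - X₂ *ᵥ b₂ ℓ)))
    (hrec₂ : ∀ ℓ, b₂ (ℓ + 1) = Λ₂⁻¹ *ᵥ (X₂ᵀ *ᵥ (y - X₁ *ᵥ b₁ (ℓ + 1)))) (ℓ : ℕ) :
    b₂ (ℓ + 1) = (Λ₂⁻¹ * X₂ᵀ * (1 - S₁)) *ᵥ y + (Λ₂⁻¹ * X₂ᵀ * S₁ * X₂) *ᵥ b₂ ℓ := by
  subst hS₁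
  rw [hrec₂, hrec₁]
  simp only [mulVec_sub, mulVec_mulVec, sub_mulVec, Matrix.mul_sub, Matrix.mul_one,
    Matrix.mul_assoc]
  abel

theorem backfitting_closed_form_general
    (n K : ℕ)
    (X₁ X₂ : Matrix (Fin n) (Fin K) ℝ)
    (Λ₁ Λ₂ : Matrix (Fin K) (Fin K) ℝ)
    (S₁ S₂ : Matrix (Fin n) (Fin n) ℝ)
    (hS₁ : S₁ = X₁ * Λ₁⁻¹ * X₁ᵀ) (hS₂ : S₂ = X₂ * Λ₂⁻¹ * X₂ᵀ)
    (y : Fin n → ℝ)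
    (b₁ b₂ : ℕ → (Fin K → ℝ))
    (hrec₁ : ∀ ℓ, b₁ (ℓ + 1) = Λ₁⁻¹ *ᵥ (X₁ᵀ *ᵥ (y - X₂ *ᵥ b₂ ℓ)))
    (hrec₂ : ∀ ℓ, b₂ (ℓ + 1) = Λ₂⁻¹ *ᵥ (X₂ᵀ *ᵥ (y - X₁ *ᵥ b₁ (ℓ + 1)))) :
    ∀ ℓ : ℕ,
      b₂ (ℓ + 1)
        = (Λ₂⁻¹ * X₂ᵀ * (∑ j ∈ Finset.range (ℓ + 1), (S₁ * S₂) ^ j * (1 - S₁))) *ᵥ y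
          + (Λ₂⁻¹ * X₂ᵀ * (S₁ * S₂) ^ ℓ * S₁ * X₂) *ᵥ b₂ 0 := by
  intro ℓ
  have push (j : ℕ) :
      (Λ₂⁻¹ * X₂ᵀ * S₁ * X₂) ^ j * (Λ₂⁻¹ * X₂ᵀ) = Λ₂⁻¹ * X₂ᵀ * (S₁ * S₂) ^ j := by
    rw [Matrix.mul_assoc _ S₁, Matrix.mul_pow_mul, Matrix.mul_assoc S₁, hS₂,
      Matrix.mul_assoc X₂]
  have geom_sum :
      (∑ j ∈ Finset.range (ℓ + 1), (Λ₂⁻¹ * X₂ᵀ * S₁ * X₂) ^ j) * (Λ₂⁻¹ * X₂ᵀ * (1 - S₁))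
        = Λ₂⁻¹ * X₂ᵀ * ∑ j ∈ Finset.range (ℓ + 1), (S₁ * S₂) ^ j * (1 - S₁) := by
    rw [Matrix.sum_mul, Matrix.mul_sum]
    refine Finset.sum_congr rfl fun j _ => ?_
    rw [← Matrix.mul_assoc, push, Matrix.mul_assoc]
  have last_pow :
      (Λ₂⁻¹ * X₂ᵀ * S₁ * X₂) ^ (ℓ + 1) = Λ₂⁻¹ * X₂ᵀ * (S₁ * S₂) ^ ℓ * S₁ * X₂ := by
    rw [pow_succ, ← Matrix.mul_assoc, ← Matrix.mul_assoc, push]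
  rw [eq_geom_sum_mulVec_of_affine_rec _ _ b₂
    (backfitting_step X₁ X₂ Λ₁ Λ₂ S₁ hS₁ y b₁ b₂ hrec₁ hrec₂) (ℓ + 1), mulVec_mulVec, geom_sum,
    last_pow]

/-- Closed form of the second-component backfitting iterate in the bivariate
penalized additive B-spline model. -/
theorem backfitting_closed_form
    (n K : ℕ)
    (X₁ X₂ : Matrix (Fin n) (Fin K) ℝ) (Q : Matrix (Fin K) (Fin K) ℝ)
    (hQ : Q.IsSymm) (l₁ l₂ : ℝ) (hl₁ : 0 < l₁) (hl₂ : 0 < l₂)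
    (Λ₁ Λ₂ : Matrix (Fin K) (Fin K) ℝ)
    (hΛ₁ : Λ₁ = X₁ᵀ * X₁ + l₁ • Q) (hΛ₂ : Λ₂ = X₂ᵀ * X₂ + l₂ • Q)
    (hΛ₁inv : IsUnit Λ₁) (hΛ₂inv : IsUnit Λ₂)
    (S₁ S₂ : Matrix (Fin n) (Fin n) ℝ)
    (hS₁ : S₁ = X₁ * Λ₁⁻¹ * X₁ᵀ) (hS₂ : S₂ = X₂ * Λ₂⁻¹ * X₂ᵀ)
    (y : Fin n → ℝ)
    (b₁ b₂ : ℕ → (Fin K → ℝ))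
    (hrec₁ : ∀ ℓ, b₁ (ℓ + 1) = Λ₁⁻¹ *ᵥ (X₁ᵀ *ᵥ (y - X₂ *ᵥ b₂ ℓ)))
    (hrec₂ : ∀ ℓ, b₂ (ℓ + 1) = Λ₂⁻¹ *ᵥ (X₂ᵀ *ᵥ (y - X₁ *ᵥ b₁ (ℓ + 1)))) :
    ∀ ℓ : ℕ,
      b₂ (ℓ + 1)
        = (Λ₂⁻¹ * X₂ᵀ * (∑ j ∈ Finset.range (ℓ + 1), (S₁ * S₂) ^ j * (1 - S₁))) *ᵥ y
          + (Λ₂⁻¹ * X₂ᵀ * (S₁ * S₂) ^ ℓ * S₁ * X₂) *ᵥ b₂ 0 :=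
  backfitting_closed_form_general n K X₁ X₂ Λ₁ Λ₂ S₁ S₂ hS₁ hS₂ y b₁ b₂ hrec₁ hrec₂
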